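/- Let d = 3 and let x ∈ ℝ³ satisfy ε < |x| < 2. Set r' = |F_ε(x)|. Then the push-forward density satisfies 1/det(DF_ε(x)) = (2-ε)·(2-ε-(2-2ε)/r')². -/

import Mathlib

/-!
On the annulus `ε < |x| < 2` the map `F_ε` is radial, `x ↦ g(|x|) x/|x|`, with the affine profile
`g(r) = (2 - 2ε + r)/(2 - ε)`, so that `r' = g(|x|)`. The differential of a radial map acts as
`g(r)/r` on `x^⊥` and as `g'(r)` along `x`; by the matrix determinant lemma its determinant is
`(g(r)/r)^(n-1) g'(r) = (r'/|x|)^2/(2 - ε)`, and `2 - ε - (2 - 2ε)/r' = |x|/r'`.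
-/

/-- The Kohn regularised cloaking map `F_ε : ℝ³ → ℝ³`. -/
noncomputable def kohnMap3 (ε : ℝ) (x : EuclideanSpace ℝ (Fin 3)) :
    EuclideanSpace ℝ (Fin 3) :=
  if 2 ≤ ‖x‖ then x
  else if ε ≤ ‖x‖ then ((2 - 2 * ε) / (2 - ε) + ‖x‖ / (2 - ε)) • (‖x‖⁻¹ • x)
  else ε⁻¹ • x

open Filter Topology Module

theorem LinearMap.det_id_add_smulRight {R M : Type*} [CommRing R] [AddCommGroup M]
    [Module R M] [Module.Free R M] [Module.Finite R M] (f : M →ₗ[R] R) (v : M) :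
    LinearMap.det (LinearMap.id + f.smulRight v) = 1 + f v := by
  classical
  let b := Module.Free.chooseBasis R M
  rw [← LinearMap.det_toMatrix b, map_add, LinearMap.toMatrix_id, LinearMap.toMatrix_smulRight,
    Matrix.vecMulVec_eq Unit, Matrix.det_one_add_replicateCol_mul_replicateRow]
  simp only [dotProduct, Function.comp_apply]
  conv_rhs => rw [← b.sum_repr v, map_sum]
  simp only [map_smul, smul_eq_mul, mul_comm]

section Radial

variable {E : Type*} [NormedAddCommGroup E] [InnerProductSpace ℝ E]

theorem hasFDerivAt_norm {x : E} (hx : x ≠ 0) :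
    HasFDerivAt (‖·‖) (‖x‖⁻¹ • innerSL ℝ x) x := by
  have h := (hasStrictFDerivAt_norm_sq x).hasFDerivAt.sqrt (by positivity)
  simp only [Real.sqrt_sq (norm_nonneg _)] at h
  convert h using 1
  ext y
  simp only [smul_apply, coe_innerSL_apply, smul_eq_mul, nsmul_eq_mul,
    Nat.cast_ofNat]
  field_simp

noncomputable def radialMap (g : ℝ → ℝ) (y : E) : E := g ‖y‖ • (‖y‖⁻¹ • y)

theorem norm_radialMap (g : ℝ → ℝ) {x : E} (hx : x ≠ 0) : ‖radialMap g x‖ = |g ‖x‖| := by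
  rw [radialMap, norm_smul, norm_smul, norm_inv, norm_norm,
    inv_mul_cancel₀ (norm_ne_zero_iff.2 hx), mul_one, Real.norm_eq_abs]

theorem hasFDerivAt_radialMap {g : ℝ → ℝ} {g' : ℝ} {x : E} (hx : x ≠ 0)
    (hg : HasDerivAt g g' ‖x‖) :
    HasFDerivAt (radialMap g)
      ((g ‖x‖ / ‖x‖) • ContinuousLinearMap.id ℝ E
        + (((g' - g ‖x‖ / ‖x‖) / ‖x‖ ^ 2) • innerSL ℝ x).smulRight x) x := by
  have hx' : ‖x‖ ≠ 0 := norm_ne_zero_iff.2 hx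
  have hφ : HasDerivAt (fun r => g r / r) ((g' - g ‖x‖ / ‖x‖) / ‖x‖) ‖x‖ := by
    refine (hg.div (hasDerivAt_id' _) hx').congr_deriv ?_
    field_simp
  have hn : HasFDerivAt (‖·‖ : E → ℝ) (‖x‖⁻¹ • innerSL ℝ x) x := hasFDerivAt_norm hx
  have h := (hφ.comp_hasFDerivAt x hn).smul (hasFDerivAt_id x)
  have hfun : (radialMap g : E → E) = ((fun r => g r / r) ∘ (‖·‖ : E → ℝ)) • id := by
    ext1 y
    simp [radialMap, smul_smul, div_eq_mul_inv]
  rw [hfun]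
  convert h using 1
  ext y
  simp only [add_apply, smul_apply,
    ContinuousLinearMap.id_apply, ContinuousLinearMap.smulRight_apply, coe_innerSL_apply,
    smul_eq_mul, Function.comp_apply, smul_smul, id_eq, add_right_inj]
  field_simp

theorem det_fderiv_radialMap [FiniteDimensional ℝ E] {g : ℝ → ℝ} {g' : ℝ} {x : E} (hx : x ≠ 0)
    (hg : HasDerivAt g g' ‖x‖) (hgx : g ‖x‖ ≠ 0) :
    (fderiv ℝ (radialMap g) x).det = (g ‖x‖ / ‖x‖) ^ (finrank ℝ E - 1) * g' := by
  have : Nontrivial E := ⟨x, 0, hx⟩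
  set a := g ‖x‖ / ‖x‖
  have ha : a ≠ 0 := div_ne_zero hgx (norm_ne_zero_iff.2 hx)
  -- factor out `a` to reach the matrix determinant lemma `det (1 + v ⊗ f) = 1 + f v`
  have hsplit : (fderiv ℝ (radialMap g) x : E →ₗ[ℝ] E) = a • (LinearMap.id +
      ((a⁻¹ * ((g' - a) / ‖x‖ ^ 2)) • (innerSL ℝ x : E →ₗ[ℝ] ℝ)).smulRight x) := by
    rw [(hasFDerivAt_radialMap hx hg).fderiv]
    ext y
    simp only [ContinuousLinearMap.toLinearMap_add, ContinuousLinearMap.toLinearMap_smul,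
      ContinuousLinearMap.coe_id, ContinuousLinearMap.coe_smulRight,
      ContinuousLinearMap.toLinearMap_innerSL_apply, LinearMap.add_apply, LinearMap.smul_apply,
      LinearMap.id_coe, id_eq, LinearMap.coe_smulRight, innerₛₗ_apply_apply, smul_eq_mul, smul_add,
      smul_smul, a]
    field_simp
  rw [ContinuousLinearMap.det, hsplit, LinearMap.det_smul, LinearMap.det_id_add_smulRight]
  simp only [LinearMap.smul_apply, ContinuousLinearMap.coe_coe, innerSL_apply_apply,
    real_inner_self_eq_norm_sq, smul_eq_mul]
  obtain ⟨n, hn⟩ := Nat.exists_eq_succ_of_ne_zero (finrank_pos (R := ℝ) (M := E)).ne'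
  rw [hn, Nat.succ_sub_one, pow_succ]
  field_simp
  ring

end Radial

theorem kohnMap3_eventuallyEq_radialMap {ε : ℝ} {x : EuclideanSpace ℝ (Fin 3)}
    (hx1 : ε < ‖x‖) (hx2 : ‖x‖ < 2) :
    kohnMap3 ε =ᶠ[𝓝 x] radialMap fun r => (2 - 2 * ε) / (2 - ε) + r / (2 - ε) := by
  filter_upwards [(isOpen_Ioo.preimage continuous_norm).mem_nhds ⟨hx1, hx2⟩] with y hy
  rw [kohnMap3, if_neg (not_le.2 hy.2), if_pos hy.1.le, radialMap]

/-- In dimension 3, with `r' = |F_ε(x)|`, the push-forward density satisfies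
`1/det(DF_ε(x)) = (2-ε)·(2-ε-(2-2ε)/r')²`. -/
theorem kohnMap3_pushforward_density (ε : ℝ) (hε0 : 0 < ε) (hε1 : ε < 1)
    (x : EuclideanSpace ℝ (Fin 3)) (hx1 : ε < ‖x‖) (hx2 : ‖x‖ < 2)
    (r' : ℝ) (hr' : r' = ‖kohnMap3 ε x‖) :
    (LinearMap.det (fderiv ℝ (kohnMap3 ε) x :
        EuclideanSpace ℝ (Fin 3) →ₗ[ℝ] EuclideanSpace ℝ (Fin 3)))⁻¹ =
      (2 - ε) * (2 - ε - (2 - 2 * ε) / r') ^ 2 := by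
  have hx0 : x ≠ 0 := norm_pos_iff.1 (hε0.trans hx1)
  have h2ε : 0 < 2 - ε := by linarith
  set g : ℝ → ℝ := fun r => (2 - 2 * ε) / (2 - ε) + r / (2 - ε)
  have hF : kohnMap3 ε =ᶠ[𝓝 x] radialMap g := kohnMap3_eventuallyEq_radialMap hx1 hx2
  have hg : HasDerivAt g (2 - ε)⁻¹ ‖x‖ :=
    (((hasDerivAt_id' _).div_const _).const_add _).congr_deriv (one_div _)
  have hgx : 0 < g ‖x‖ :=
    add_pos (div_pos (by linarith) h2ε) (div_pos (hε0.trans hx1) h2ε)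
  have hr : r' = g ‖x‖ := by
    rw [hr', hF.eq_of_nhds, norm_radialMap g hx0, abs_of_pos hgx]
  rw [hF.fderiv_eq, ← ContinuousLinearMap.det, det_fderiv_radialMap hx0 hg hgx.ne',
    finrank_euclideanSpace_fin, show 3 - 1 = 2 from rfl, ← hr]
  have hrx : (2 - ε) * r' = 2 - 2 * ε + ‖x‖ := by
    simp only [hr, g]
    field_simp
  have hr0 : r' ≠ 0 := hr ▸ hgx.ne'
  have hx : ‖x‖ ≠ 0 := norm_ne_zero_iff.2 hx0
  have key : 2 - ε - (2 - 2 * ε) / r' = ‖x‖ / r' := by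
    field_simp
    linarith
  rw [key]
  field_simp
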